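/- arXiv:1612.08387 — 3 statements merged into one kernel-verified Lean document; each statement's English description precedes it below -/
import Mathlib

section
/- Let μ be a measure on (x₁, b) (with x₁ < b ≤ ∞), let f, g : (x₁, b) → (0, ∞) be measurable, and let r, s > 0, c_f, c_g ∈ ℝ be constants. Suppose ∫_{(x₁, x]} g dμ → ∞ as x → b⁻, that lim_{x→b⁻} f(x)/g(x) = L exists in [0, ∞), and that for all x ∈ (x₁, b), F(x) = c_f + r ∫_{(x₁,x]} f dμ and G(x) = c_g + s ∫_{(x₁,x]} g dμ with G(x) > 0 eventually. If additionally lim_{x→b⁻} F(x)/G(x) = L, then L = (r/s) L, and hence, when r ≠ s, L = 0. -/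
open Filter Set Topology MeasureTheory
open scoped ENNReal

/-- The filter of real numbers tending to the (possibly infinite) extended-real
endpoint `b` from the left. -/
noncomputable def leftLimFilter (b : EReal) : Filter ℝ :=
  Filter.comap (fun x : ℝ => (x : EReal)) (nhdsWithin b (Set.Iio b))

/-!
Since `f - L g = o(g)` and `∫ g → ∞`, integrating gives `∫ f - L ∫ g = o(∫ g)`: the part of the
integral below any fixed threshold is a constant, swamped by `∫ g`. Hence `∫ f / ∫ g → L`, so
`F / G → r L / s`, and uniqueness of limits gives `L = (r / s) L`.
-/

theorem leftLimFilter_hasBasis {b : EReal} (hb : ⊥ < b) :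
    (leftLimFilter b).HasBasis (fun a : ℝ => (a : EReal) < b)
      (fun a => {x : ℝ | a < x ∧ (x : EReal) < b}) := by
  refine ((nhdsLT_basis_of_exists_lt ⟨⊥, hb⟩).comap _).to_hasBasis (fun l hl => ?_)
    (fun a ha => ⟨a, ha, fun x hx => ⟨EReal.coe_lt_coe_iff.1 hx.1, hx.2⟩⟩)
  obtain ⟨a, hla, hab⟩ := EReal.lt_iff_exists_real_btwn.1 hl
  exact ⟨a, hab, fun x hx => ⟨hla.trans (EReal.coe_lt_coe_iff.2 hx.1), hx.2⟩⟩

theorem leftLimFilter_neBot {b : EReal} (hb : ⊥ < b) : (leftLimFilter b).NeBot :=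
  (leftLimFilter_hasBasis hb).neBot_iff.2 fun {a} hab => by
    obtain ⟨x, hax, hxb⟩ := EReal.lt_iff_exists_real_btwn.1 hab
    exact ⟨x, EReal.coe_lt_coe_iff.1 hax, hxb⟩

theorem eventually_leftLimFilter {a : ℝ} {b : EReal} (hab : (a : EReal) < b) :
    ∀ᶠ x in leftLimFilter b, a < x ∧ (x : EReal) < b :=
  (leftLimFilter_hasBasis ((EReal.bot_lt_coe a).trans hab)).mem_of_mem hab

theorem setIntegral_Ioc_eq_add {μ : Measure ℝ} {h : ℝ → ℝ} {x₁ x₀ x : ℝ}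
    (h₁ : x₁ ≤ x₀) (h₂ : x₀ ≤ x)
    (hh : IntegrableOn h (Ioc x₁ x) μ) :
    ∫ y in Ioc x₁ x, h y ∂μ = (∫ y in Ioc x₁ x₀, h y ∂μ) + ∫ y in Ioc x₀ x, h y ∂μ := by
  rw [← Ioc_union_Ioc_eq_Ioc h₁ h₂, setIntegral_union (Ioc_disjoint_Ioc_of_le le_rfl)
    measurableSet_Ioc (hh.mono_set (Ioc_subset_Ioc_right h₂))
    (hh.mono_set (Ioc_subset_Ioc_left h₁))]

theorem abs_setIntegral_Ioc_le {μ : Measure ℝ} {h g : ℝ → ℝ} {x₁ x₀ x ε : ℝ}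
    (h₁ : x₁ ≤ x₀) (h₂ : x₀ ≤ x) (hh : IntegrableOn h (Ioc x₁ x) μ)
    (hg : IntegrableOn g (Ioc x₁ x) μ) (hg_nonneg : ∀ y ∈ Ioc x₁ x, 0 ≤ g y) (hε : 0 ≤ ε)
    (hhg : ∀ y ∈ Ioc x₀ x, |h y| ≤ ε * g y) :
    |∫ y in Ioc x₁ x, h y ∂μ| ≤
      |∫ y in Ioc x₁ x₀, h y ∂μ| + ε * ∫ y in Ioc x₁ x, g y ∂μ := by
  have htail : |∫ y in Ioc x₀ x, h y ∂μ| ≤ ε * ∫ y in Ioc x₀ x, g y ∂μ := by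
    rw [← integral_const_mul]
    exact norm_integral_le_of_norm_le ((hg.mono_set (Ioc_subset_Ioc_left h₁)).const_mul ε)
      ((ae_restrict_iff' measurableSet_Ioc).2 <| Eventually.of_forall fun y hy =>
        (Real.norm_eq_abs _).trans_le (hhg y hy))
  have hmono : ∫ y in Ioc x₀ x, g y ∂μ ≤ ∫ y in Ioc x₁ x, g y ∂μ :=
    setIntegral_mono_set hg
      ((ae_restrict_iff' measurableSet_Ioc).2 (Eventually.of_forall hg_nonneg))
      (Eventually.of_forall (Ioc_subset_Ioc_left h₁))
  rw [setIntegral_Ioc_eq_add h₁ h₂ hh]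
  calc _ ≤ |∫ y in Ioc x₁ x₀, h y ∂μ| + |∫ y in Ioc x₀ x, h y ∂μ| :=
        abs_add_le _ _
    _ ≤ _ := by gcongr; exact htail.trans (by gcongr)

theorem isLittleO_setIntegral_Ioc {μ : Measure ℝ} {h g : ℝ → ℝ} {x₁ : ℝ} {b : EReal}
    (hb : (x₁ : EReal) < b)
    (hh_int : ∀ x : ℝ, x₁ < x → (x : EReal) < b → IntegrableOn h (Ioc x₁ x) μ)
    (hg_int : ∀ x : ℝ, x₁ < x → (x : EReal) < b → IntegrableOn g (Ioc x₁ x) μ)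
    (hg_nonneg : ∀ x : ℝ, x₁ < x → (x : EReal) < b → 0 ≤ g x)
    (hg_top : Tendsto (fun x => ∫ y in Ioc x₁ x, g y ∂μ) (leftLimFilter b) atTop)
    (hhg : h =o[leftLimFilter b] g) :
    (fun x => ∫ y in Ioc x₁ x, h y ∂μ) =o[leftLimFilter b]
      fun x => ∫ y in Ioc x₁ x, g y ∂μ := by
  refine Asymptotics.IsLittleO.of_bound fun c hc => ?_
  obtain ⟨a, hab, ha⟩ :=
    (leftLimFilter_hasBasis ((EReal.bot_lt_coe x₁).trans hb)).eventually_iff.1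
      (hhg.bound (half_pos hc))
  set x₀ := max a x₁
  have hx₀b : (x₀ : EReal) < b := EReal.coe_strictMono.monotone.map_max.trans_lt (max_lt hab hb)
  set C := |∫ y in Ioc x₁ x₀, h y ∂μ|
  filter_upwards [eventually_leftLimFilter hx₀b, hg_top.eventually_ge_atTop (2 * C / c)]
    with x ⟨hx₀x, hxb⟩ hCx
  have hx₁x : x₁ < x := (le_max_right a x₁).trans_lt hx₀x
  have hg_nonneg' : ∀ y ∈ Ioc x₁ x, 0 ≤ g y := fun y hy =>
    hg_nonneg y hy.1 ((EReal.coe_le_coe_iff.2 hy.2).trans_lt hxb)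
  have hsplit := abs_setIntegral_Ioc_le (le_max_right a x₁) hx₀x.le (hh_int x hx₁x hxb)
    (hg_int x hx₁x hxb) hg_nonneg' (half_pos hc).le fun y hy => by
      have hy₁ : y ∈ Ioc x₁ x := ⟨(le_max_right a x₁).trans_lt hy.1, hy.2⟩
      simpa [Real.norm_eq_abs, abs_of_nonneg (hg_nonneg' y hy₁)] using
        ha ⟨(le_max_left a x₁).trans_lt hy.1, (EReal.coe_le_coe_iff.2 hy.2).trans_lt hxb⟩
  rw [Real.norm_eq_abs, Real.norm_eq_abs,
    abs_of_nonneg (setIntegral_nonneg measurableSet_Ioc hg_nonneg')]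
  rw [div_le_iff₀ hc] at hCx
  linarith

theorem tendsto_setIntegral_Ioc_div_of_tendsto_div {μ : Measure ℝ} {f g : ℝ → ℝ} {x₁ : ℝ}
    {b : EReal} (hb : (x₁ : EReal) < b)
    (hf_int : ∀ x : ℝ, x₁ < x → (x : EReal) < b → IntegrableOn f (Ioc x₁ x) μ)
    (hg_int : ∀ x : ℝ, x₁ < x → (x : EReal) < b → IntegrableOn g (Ioc x₁ x) μ)
    (hg_pos : ∀ x : ℝ, x₁ < x → (x : EReal) < b → 0 < g x)
    (hg_top : Tendsto (fun x => ∫ y in Ioc x₁ x, g y ∂μ) (leftLimFilter b) atTop)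
    {L : ℝ} (hL : Tendsto (fun x => f x / g x) (leftLimFilter b) (𝓝 L)) :
    Tendsto (fun x => (∫ y in Ioc x₁ x, f y ∂μ) / ∫ y in Ioc x₁ x, g y ∂μ)
      (leftLimFilter b) (𝓝 L) := by
  have hg_ne : ∀ᶠ x in leftLimFilter b, g x ≠ 0 := by
    filter_upwards [eventually_leftLimFilter hb] with x ⟨hx₁, hxb⟩
    exact (hg_pos x hx₁ hxb).ne'
  have hsmall : (fun x => f x - L * g x) =o[leftLimFilter b] g := by
    rw [Asymptotics.isLittleO_iff_tendsto' (hg_ne.mono fun x hx h0 => absurd h0 hx)]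
    refine (sub_self L ▸ hL.sub_const L).congr' ?_
    filter_upwards [hg_ne] with x hx
    field_simp
  have hdiff := (isLittleO_setIntegral_Ioc (h := fun x => f x - L * g x) hb
    (fun x hx hxb => (hf_int x hx hxb).sub ((hg_int x hx hxb).const_mul L)) hg_int
    (fun x hx hxb => (hg_pos x hx hxb).le) hg_top hsmall).tendsto_div_nhds_zero
  refine (zero_add L ▸ hdiff.add_const L).congr' ?_
  filter_upwards [eventually_leftLimFilter hb, hg_top.eventually_gt_atTop 0]
    with x ⟨hx₁, hxb⟩ hIg
  rw [integral_sub (hf_int x hx₁ hxb) ((hg_int x hx₁ hxb).const_mul L), integral_const_mul]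
  field_simp
  ring

theorem tendsto_affine_div_affine {α : Type*} {l : Filter α} {u v : α → ℝ} {L c d r s : ℝ}
    (hv : Tendsto v l atTop) (huv : Tendsto (fun x => u x / v x) l (𝓝 L)) (hs : s ≠ 0) :
    Tendsto (fun x => (c + r * u x) / (d + s * v x)) l (𝓝 (r * L / s)) := by
  have hlim : Tendsto (fun x => (c / v x + r * (u x / v x)) / (d / v x + s)) l
      (𝓝 ((0 + r * L) / (0 + s))) :=
    ((tendsto_const_nhds.div_atTop hv).add (huv.const_mul r)).div
      ((tendsto_const_nhds.div_atTop hv).add_const s) (by simpa using hs)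
  rw [zero_add, zero_add] at hlim
  refine hlim.congr' ?_
  filter_upwards [hv.eventually_ne_atTop 0] with x hx
  field_simp

theorem scaled_antiderivative_ratio_limit_general
    (x₁ : ℝ) (b : EReal) (hb : (x₁ : EReal) < b)
    (μ : Measure ℝ) (f g F G : ℝ → ℝ)
    (r s c_f c_g : ℝ) (hs : 0 < s)
    (hg_pos : ∀ x : ℝ, x₁ < x → (x : EReal) < b → 0 < g x)
    (hf_int : ∀ x : ℝ, x₁ < x → (x : EReal) < b → IntegrableOn f (Set.Ioc x₁ x) μ)
    (hg_int : ∀ x : ℝ, x₁ < x → (x : EReal) < b → IntegrableOn g (Set.Ioc x₁ x) μ)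
    (hg_top : Tendsto (fun x => ∫ y in Set.Ioc x₁ x, g y ∂μ) (leftLimFilter b) atTop)
    (L : ℝ)
    (hL : Tendsto (fun x => f x / g x) (leftLimFilter b) (nhds L))
    (hF : ∀ x : ℝ, x₁ < x → (x : EReal) < b → F x = c_f + r * ∫ y in Set.Ioc x₁ x, f y ∂μ)
    (hG : ∀ x : ℝ, x₁ < x → (x : EReal) < b → G x = c_g + s * ∫ y in Set.Ioc x₁ x, g y ∂μ)
    (hFG : Tendsto (fun x => F x / G x) (leftLimFilter b) (nhds L)) :
    L = (r / s) * L ∧ (r ≠ s → L = 0) := by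
  have := leftLimFilter_neBot ((EReal.bot_lt_coe x₁).trans hb)
  have hFG' : Tendsto (fun x => F x / G x) (leftLimFilter b) (𝓝 (r * L / s)) := by
    have hIfg := tendsto_setIntegral_Ioc_div_of_tendsto_div hb hf_int hg_int hg_pos hg_top hL
    refine (tendsto_affine_div_affine (c := c_f) (d := c_g) hg_top hIfg hs.ne').congr' ?_
    filter_upwards [eventually_leftLimFilter hb] with x ⟨hx₁, hxb⟩
    rw [hF x hx₁ hxb, hG x hx₁ hxb]
  have hL_eq : L = r / s * L := by rw [div_mul_eq_mul_div]; exact tendsto_nhds_unique hFG hFG'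
  refine ⟨hL_eq, fun hrs => by_contra fun hL0 => hrs ?_⟩
  exact (div_eq_one_iff_eq hs.ne').1 (mul_right_cancel₀ hL0 ((one_mul L).trans hL_eq)).symm

/-- If `f/g → L ∈ [0, ∞)` at `b⁻`, `∫_{(x₁,x]} g dμ → ∞`, and
`F(x) = c_f + r ∫_{(x₁,x]} f dμ`, `G(x) = c_g + s ∫_{(x₁,x]} g dμ` with `G > 0`
eventually and `F/G → L` at `b⁻` as well, then `L = (r/s) L`; hence `L = 0` when `r ≠ s`. -/
theorem scaled_antiderivative_ratio_limit
    (x₁ : ℝ) (b : EReal) (hb : (x₁ : EReal) < b)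
    (μ : Measure ℝ) (f g F G : ℝ → ℝ)
    (r s c_f c_g : ℝ) (hr : 0 < r) (hs : 0 < s)
    (hf_meas : Measurable f) (hg_meas : Measurable g)
    (hf_pos : ∀ x : ℝ, x₁ < x → (x : EReal) < b → 0 < f x)
    (hg_pos : ∀ x : ℝ, x₁ < x → (x : EReal) < b → 0 < g x)
    (hf_int : ∀ x : ℝ, x₁ < x → (x : EReal) < b → IntegrableOn f (Set.Ioc x₁ x) μ)
    (hg_int : ∀ x : ℝ, x₁ < x → (x : EReal) < b → IntegrableOn g (Set.Ioc x₁ x) μ)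
    (hg_top : Tendsto (fun x => ∫ y in Set.Ioc x₁ x, g y ∂μ) (leftLimFilter b) atTop)
    (L : ℝ) (hL0 : 0 ≤ L)
    (hL : Tendsto (fun x => f x / g x) (leftLimFilter b) (nhds L))
    (hF : ∀ x : ℝ, x₁ < x → (x : EReal) < b → F x = c_f + r * ∫ y in Set.Ioc x₁ x, f y ∂μ)
    (hG : ∀ x : ℝ, x₁ < x → (x : EReal) < b → G x = c_g + s * ∫ y in Set.Ioc x₁ x, g y ∂μ)
    (hG_pos : ∀ᶠ x in leftLimFilter b, 0 < G x)
    (hFG : Tendsto (fun x => F x / G x) (leftLimFilter b) (nhds L)) :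
    L = (r / s) * L ∧ (r ≠ s → L = 0) :=
  scaled_antiderivative_ratio_limit_general x₁ b hb μ f g F G r s c_f c_g hs hg_pos hf_int hg_int
    hg_top L hL hF hG hFG
end

section
/- Let f : (α, β) → (0, ∞) be increasing and convex-with-respect-to p in the sense that its right derivative with respect to an increasing continuous function p exists everywhere and satisfies (d⁺f/dp)(x₂) − (d⁺f/dp)(x₁) = r ∫_{(x₁, x₂]} f dm for all α < x₁ < x₂ < β, where r > 0 and m is a Radon measure on (α, β) with full support. Then d⁺f/dp is increasing, and lim_{x→β⁻} (d⁺f/dp)(x) exists in (−∞, ∞]. Moreover this limit is finite if and only if ∫_{(x₁, β)} f dm < ∞ for some (equivalently all) x₁ ∈ (α, β). -/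
/-!
Let `ν` be the measure `f · m`. The hypothesis says `D y - D x = r ν (x, y]`, so `D` is
increasing and its limit at `β⁻` is its supremum over `(α, β)`. That supremum is finite iff `D` is
bounded on a tail `(c, β)`, i.e. iff `sup_{y < β} ν (c, y] = ν (c, β)` is finite; since `D` is
increasing, the choice of `c` does not matter.
-/

open Filter Set Topology MeasureTheory
open scoped ENNReal

def realIoo (a b : EReal) : Set ℝ := {x : ℝ | a < x ∧ (x : EReal) < b}

section realIoo

variable {a a' b : EReal}

@[simp]
theorem mem_realIoo {x : ℝ} : x ∈ realIoo a b ↔ a < x ∧ (x : EReal) < b := Iff.rfl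

theorem realIoo_coe_left (c : ℝ) (b : EReal) :
    realIoo c b = {y : ℝ | c < y ∧ (y : EReal) < b} := by
  ext y; simp

theorem measurableSet_realIoo : MeasurableSet (realIoo a b) :=
  measurable_coe_real_ereal measurableSet_Ioo

theorem realIoo_subset_realIoo_left (h : a ≤ a') : realIoo a' b ⊆ realIoo a b :=
  fun _ hx => ⟨h.trans_lt hx.1, hx.2⟩

theorem Ioc_subset_realIoo {x y : ℝ} (hx : a ≤ x) (hy : (y : EReal) < b) :
    Ioc x y ⊆ realIoo a b := fun _ hz =>
  ⟨hx.trans_lt (EReal.coe_lt_coe_iff.2 hz.1), (EReal.coe_le_coe_iff.2 hz.2).trans_lt hy⟩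

theorem realIoo_mem_leftLimFilter (h : a < b) : realIoo a b ∈ leftLimFilter b :=
  preimage_mem_comap (Ioo_mem_nhdsLT h)

theorem MonotoneOn.tendsto_leftLimFilter {γ : Type*} [CompleteLinearOrder γ]
    [TopologicalSpace γ] [OrderTopology γ] {g : ℝ → γ} (hab : a < b)
    (hg : MonotoneOn g (realIoo a b)) :
    Tendsto g (leftLimFilter b) (𝓝 (⨆ x ∈ realIoo a b, g x)) := by
  refine tendsto_order.2 ⟨fun l hl => ?_, fun u hu => ?_⟩
  · obtain ⟨x, hx, hlx⟩ := lt_biSup_iff.1 hl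
    filter_upwards [realIoo_mem_leftLimFilter hx.2] with y hy
    exact hlx.trans_le (hg hx ⟨hx.1.trans hy.1, hy.2⟩ (EReal.coe_lt_coe_iff.1 hy.1).le)
  · filter_upwards [realIoo_mem_leftLimFilter hab] with y hy
    exact (le_iSup₂ (f := fun x _ => g x) y hy).trans_lt hu

theorem MonotoneOn.bddAbove_image_realIoo_iff {g : ℝ → ℝ} (hg : MonotoneOn g (realIoo a b))
    {c : ℝ} (hc : c ∈ realIoo a b) :
    BddAbove (g '' realIoo a b) ↔ BddAbove (g '' realIoo c b) := by
  refine ⟨fun h => h.mono (image_mono (realIoo_subset_realIoo_left hc.1.le)), ?_⟩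
  rintro ⟨M, hM⟩
  refine ⟨max M (g c), forall_mem_image.2 fun x hx => ?_⟩
  rcases le_or_gt x c with hxc | hcx
  · exact (hg hx hc hxc).trans (le_max_right _ _)
  · exact (hM (mem_image_of_mem g ⟨EReal.coe_lt_coe_iff.2 hcx, hx.2⟩)).trans (le_max_left _ _)

theorem measure_realIoo_eq_iSup_Ioc (ν : Measure ℝ) (c : ℝ) (b : EReal) :
    ν (realIoo c b) = ⨆ y ∈ realIoo c b, ν (Ioc c y) := by
  refine le_antisymm ?_ (iSup₂_le fun y hy => measure_mono (Ioc_subset_realIoo le_rfl hy.2))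
  -- continuity from below needs a countable directed family, hence rational right endpoints
  set t : Set ℚ := {q | (q : ℝ) ∈ realIoo c b}
  have hcover : realIoo c b ⊆ ⋃ q ∈ t, Ioc c (q : ℝ) := fun y hy => by
    obtain ⟨q, hyq, hqb⟩ := EReal.exists_rat_btwn_of_lt hy.2
    exact mem_biUnion (x := q) ⟨hy.1.trans hyq, hqb⟩
      ⟨EReal.coe_lt_coe_iff.1 hy.1, (EReal.coe_lt_coe_iff.1 hyq).le⟩
  have hdir : DirectedOn (Function.onFun (· ⊆ ·) fun q : ℚ => Ioc c (q : ℝ)) t :=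
    directedOn_onFun_iff.2 <| (DirectedOn.of_linearOrder t).mono_comp fun _ _ h =>
      Ioc_subset_Ioc_right (Rat.cast_le.2 h)
  calc ν (realIoo c b) ≤ ν (⋃ q ∈ t, Ioc c (q : ℝ)) := measure_mono hcover
    _ = ⨆ q ∈ t, ν (Ioc c (q : ℝ)) := measure_biUnion_eq_iSup t.to_countable hdir
    _ ≤ ⨆ y ∈ realIoo c b, ν (Ioc c y) :=
      iSup₂_le fun q hq => le_iSup₂ (f := fun y _ => ν (Ioc c y)) (q : ℝ) hq

end realIoo

theorem EReal.biSup_coe_lt_top_iff {s : Set ℝ} {g : ℝ → ℝ} :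
    (⨆ x ∈ s, (g x : EReal)) < ⊤ ↔ BddAbove (g '' s) := by
  constructor
  · intro h
    obtain ⟨M, hM, -⟩ := EReal.exists_between_coe_real h
    exact ⟨M, forall_mem_image.2 fun x hx =>
      EReal.coe_le_coe_iff.1 ((le_iSup₂ (f := fun x _ => (g x : EReal)) x hx).trans hM.le)⟩
  · rintro ⟨M, hM⟩
    refine lt_of_le_of_lt (iSup₂_le fun x hx => ?_) (EReal.coe_lt_top M)
    exact EReal.coe_le_coe_iff.2 (hM (mem_image_of_mem g hx))

section Increment

variable {a b : EReal} {D : ℝ → ℝ} {ν : Measure ℝ} {r : ℝ}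

theorem monotoneOn_of_sub_eq_mul_measure (hr : 0 ≤ r)
    (hD : ∀ x ∈ realIoo a b, ∀ y ∈ realIoo a b, x < y → D y - D x = r * (ν (Ioc x y)).toReal) :
    MonotoneOn D (realIoo a b) := by
  intro x hx y hy hxy
  rcases hxy.eq_or_lt with rfl | hlt
  · rfl
  · exact sub_nonneg.1 ((hD x hx y hy hlt).symm ▸ mul_nonneg hr ENNReal.toReal_nonneg)

theorem bddAbove_image_realIoo_iff_measure_lt_top (hr : 0 < r)
    (hν : ∀ x ∈ realIoo a b, ∀ y ∈ realIoo a b, x < y → ν (Ioc x y) ≠ ∞)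
    (hD : ∀ x ∈ realIoo a b, ∀ y ∈ realIoo a b, x < y → D y - D x = r * (ν (Ioc x y)).toReal)
    {c : ℝ} (hc : c ∈ realIoo a b) :
    BddAbove (D '' realIoo c b) ↔ ν (realIoo c b) < ∞ := by
  have hsub : realIoo c b ⊆ realIoo a b := realIoo_subset_realIoo_left hc.1.le
  have hinc : ∀ y ∈ realIoo c b, D y = D c + r * (ν (Ioc c y)).toReal := fun y hy => by
    linarith [hD c hc y (hsub hy) (EReal.coe_lt_coe_iff.1 hy.1)]
  constructor
  · rintro ⟨M, hM⟩
    rw [measure_realIoo_eq_iSup_Ioc]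
    refine lt_of_le_of_lt (iSup₂_le fun y hy => ?_) (ENNReal.ofReal_lt_top (r := (M - D c) / r))
    rw [← ENNReal.ofReal_toReal (hν c hc y (hsub hy) (EReal.coe_lt_coe_iff.1 hy.1))]
    refine ENNReal.ofReal_le_ofReal ((le_div_iff₀' hr).2 ?_)
    linarith [hinc y hy, hM (mem_image_of_mem D hy)]
  · intro h
    refine ⟨D c + r * (ν (realIoo c b)).toReal, forall_mem_image.2 fun y hy => ?_⟩
    rw [hinc y hy]
    gcongr
    exacts [h.ne, Ioc_subset_realIoo le_rfl hy.2]

end Increment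

theorem withDensity_ofReal_Ioc_ne_top {f : ℝ → ℝ} {m : Measure ℝ} {x y : ℝ} (hxy : x < y)
    (hf : MonotoneOn f (Ioc x y)) (hm : m (Ioc x y) ≠ ∞) :
    m.withDensity (fun z => ENNReal.ofReal (f z)) (Ioc x y) ≠ ∞ := by
  rw [withDensity_apply _ measurableSet_Ioc]
  refine ne_top_of_le_ne_top (ENNReal.mul_ne_top (ENNReal.ofReal_ne_top (r := f y)) hm) ?_
  calc ∫⁻ z in Ioc x y, ENNReal.ofReal (f z) ∂m ≤ ∫⁻ _ in Ioc x y, ENNReal.ofReal (f y) ∂m :=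
        setLIntegral_mono' measurableSet_Ioc fun z hz =>
          ENNReal.ofReal_le_ofReal (hf hz (right_mem_Ioc.2 hxy) hz.2)
    _ = ENNReal.ofReal (f y) * m (Ioc x y) := setLIntegral_const _ _

theorem setIntegral_eq_toReal_withDensity_ofReal {f : ℝ → ℝ} {m : Measure ℝ} {s : Set ℝ}
    (hs : MeasurableSet s) (hf : AEStronglyMeasurable f (m.restrict s)) (hnn : ∀ y ∈ s, 0 ≤ f y) :
    ∫ y in s, f y ∂m = (m.withDensity (fun y => ENNReal.ofReal (f y)) s).toReal := by
  rw [withDensity_apply _ hs,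
    integral_eq_lintegral_of_nonneg_ae ((ae_restrict_iff' hs).2 (ae_of_all _ hnn)) hf]

theorem right_derivative_monotone_limit_iff_integrable_general
    (α β : EReal) (hαβ : α < β)
    (f D : ℝ → ℝ) (m : Measure ℝ) (r : ℝ) (hr : 0 < r)
    (hf_pos : ∀ x : ℝ, α < (x : EReal) → (x : EReal) < β → 0 < f x)
    (hf_mono : MonotoneOn f {x : ℝ | α < (x : EReal) ∧ (x : EReal) < β})
    (hODE : ∀ x₁ x₂ : ℝ, α < (x₁ : EReal) → (x₂ : EReal) < β → x₁ < x₂ →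
      D x₂ - D x₁ = r * ∫ y in Set.Ioc x₁ x₂, f y ∂m)
    (hRadon : ∀ x₁ x₂ : ℝ, α < (x₁ : EReal) → (x₂ : EReal) < β → x₁ ≤ x₂ →
      m (Set.Icc x₁ x₂) < ⊤) :
    MonotoneOn D {x : ℝ | α < (x : EReal) ∧ (x : EReal) < β} ∧
    ∃ Λ : EReal, ⊥ < Λ ∧
      Tendsto (fun x => (D x : EReal)) (leftLimFilter β) (nhds Λ) ∧
      ((Λ < ⊤) ↔ ∃ x₁ : ℝ, α < (x₁ : EReal) ∧ (x₁ : EReal) < β ∧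
        (∫⁻ y in {y : ℝ | x₁ < y ∧ (y : EReal) < β}, ENNReal.ofReal (f y) ∂m) < ⊤) ∧
      ((Λ < ⊤) ↔ ∀ x₁ : ℝ, α < (x₁ : EReal) → (x₁ : EReal) < β →
        (∫⁻ y in {y : ℝ | x₁ < y ∧ (y : EReal) < β}, ENNReal.ofReal (f y) ∂m) < ⊤) := by
  let ν := m.withDensity (fun y => ENNReal.ofReal (f y))
  have hIoc : ∀ x ∈ realIoo α β, ∀ y ∈ realIoo α β, Ioc x y ⊆ realIoo α β :=
    fun _ hx _ hy => Ioc_subset_realIoo hx.1.le hy.2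
  have hν : ∀ x ∈ realIoo α β, ∀ y ∈ realIoo α β, x < y → ν (Ioc x y) ≠ ∞ :=
    fun x hx y hy hxy => withDensity_ofReal_Ioc_ne_top hxy (hf_mono.mono (hIoc x hx y hy))
      (ne_top_of_le_ne_top (hRadon x y hx.1 hy.2 hxy.le).ne (measure_mono Ioc_subset_Icc_self))
  have hD : ∀ x ∈ realIoo α β, ∀ y ∈ realIoo α β, x < y →
      D y - D x = r * (ν (Ioc x y)).toReal := fun x hx y hy hxy => by
    rw [hODE x y hx.1 hy.2 hxy, setIntegral_eq_toReal_withDensity_ofReal measurableSet_Ioc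
      (aemeasurable_restrict_of_monotoneOn measurableSet_Ioc
        (hf_mono.mono (hIoc x hx y hy))).aestronglyMeasurable
      fun z hz => (hf_pos z (hIoc x hx y hy hz).1 (hIoc x hx y hy hz).2).le]
  have hDmono : MonotoneOn D (realIoo α β) := monotoneOn_of_sub_eq_mul_measure hr.le hD
  have hΛ : ∀ c ∈ realIoo α β, (⨆ x ∈ realIoo α β, (D x : EReal)) < ⊤ ↔
      ∫⁻ y in {y : ℝ | c < y ∧ (y : EReal) < β}, ENNReal.ofReal (f y) ∂m < ⊤ := fun c hc => by
    rw [EReal.biSup_coe_lt_top_iff, hDmono.bddAbove_image_realIoo_iff hc,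
      bddAbove_image_realIoo_iff_measure_lt_top hr hν hD hc, ← realIoo_coe_left,
      withDensity_apply _ measurableSet_realIoo]
  obtain ⟨c, hαc, hcβ⟩ := EReal.exists_between_coe_real hαβ
  refine ⟨hDmono, ⨆ x ∈ realIoo α β, (D x : EReal), ?_, ?_, ?_, ?_⟩
  · exact (EReal.bot_lt_coe (D c)).trans_le
      (le_iSup₂ (f := fun x _ => (D x : EReal)) c ⟨hαc, hcβ⟩)
  · exact (EReal.coe_strictMono.monotone.comp_monotoneOn hDmono).tendsto_leftLimFilter hαβ
  · exact ⟨fun h => ⟨c, hαc, hcβ, (hΛ c ⟨hαc, hcβ⟩).1 h⟩,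
      fun ⟨x, hx₁, hx₂, h⟩ => (hΛ x ⟨hx₁, hx₂⟩).2 h⟩
  · exact ⟨fun h x hx₁ hx₂ => (hΛ x ⟨hx₁, hx₂⟩).1 h,
      fun h => (hΛ c ⟨hαc, hcβ⟩).2 (h c hαc hcβ)⟩

/-- If `f : (α, β) → (0, ∞)` is increasing, has a right derivative `D = d⁺f/dp` with respect
to a continuous strictly increasing `p`, and
`D(x₂) − D(x₁) = r ∫_{(x₁,x₂]} f dm` for a Radon measure `m` of full support and `r > 0`,
then `D` is increasing, `lim_{x→β⁻} D(x)` exists in `(−∞, ∞]`, and this limit is finite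
if and only if `∫_{(x₁,β)} f dm < ∞` for some (equivalently, all) `x₁ ∈ (α, β)`. -/
theorem right_derivative_monotone_limit_iff_integrable
    (α β : EReal) (hαβ : α < β)
    (f D p : ℝ → ℝ) (m : Measure ℝ) (r : ℝ) (hr : 0 < r)
    (hf_pos : ∀ x : ℝ, α < (x : EReal) → (x : EReal) < β → 0 < f x)
    (hf_mono : MonotoneOn f {x : ℝ | α < (x : EReal) ∧ (x : EReal) < β})
    (hp_mono : StrictMonoOn p {x : ℝ | α < (x : EReal) ∧ (x : EReal) < β})
    (hp_cont : ContinuousOn p {x : ℝ | α < (x : EReal) ∧ (x : EReal) < β})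
    (hD : ∀ x : ℝ, α < (x : EReal) → (x : EReal) < β →
      Tendsto (fun ε => (f (x + ε) - f x) / (p (x + ε) - p x))
        (nhdsWithin 0 (Set.Ioi 0)) (nhds (D x)))
    (hODE : ∀ x₁ x₂ : ℝ, α < (x₁ : EReal) → (x₂ : EReal) < β → x₁ < x₂ →
      D x₂ - D x₁ = r * ∫ y in Set.Ioc x₁ x₂, f y ∂m)
    (hRadon : ∀ x₁ x₂ : ℝ, α < (x₁ : EReal) → (x₂ : EReal) < β → x₁ ≤ x₂ →
      m (Set.Icc x₁ x₂) < ⊤)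
    (hsupp : ∀ x₁ x₂ : ℝ, α < (x₁ : EReal) → (x₂ : EReal) < β → x₁ < x₂ →
      0 < m (Set.Ioo x₁ x₂)) :
    MonotoneOn D {x : ℝ | α < (x : EReal) ∧ (x : EReal) < β} ∧
    ∃ Λ : EReal, ⊥ < Λ ∧
      Tendsto (fun x => (D x : EReal)) (leftLimFilter β) (nhds Λ) ∧
      ((Λ < ⊤) ↔ ∃ x₁ : ℝ, α < (x₁ : EReal) ∧ (x₁ : EReal) < β ∧
        (∫⁻ y in {y : ℝ | x₁ < y ∧ (y : EReal) < β}, ENNReal.ofReal (f y) ∂m) < ⊤) ∧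
      ((Λ < ⊤) ↔ ∀ x₁ : ℝ, α < (x₁ : EReal) → (x₁ : EReal) < β →
        (∫⁻ y in {y : ℝ | x₁ < y ∧ (y : EReal) < β}, ENNReal.ofReal (f y) ∂m) < ⊤) :=
  right_derivative_monotone_limit_iff_integrable_general α β hαβ f D m r hr hf_pos hf_mono hODE
    hRadon
end

section
/- Let p : (α, β) → ℝ be continuous and strictly increasing with p(x) → ∞ as x → β⁻, and let ψ : (α, β) → (0, ∞) satisfy: the right derivative d⁺ψ/dp exists on (α, β) and lim_{x→β⁻} (d⁺ψ/dp)(x) = L ∈ (0, ∞]. Then lim_{x→β⁻} ψ(x)/p(x) = L. -/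
/-!
A right derivative cannot be integrated, but a fencing argument replaces the mean value theorem:
if `d⁺ψ/dp > m` on `[a, x]`, then `m * p - ψ` is continuous and drops just to the right of every
point, hence `ψ x - ψ a ≥ m * (p x - p a)`. Once `d⁺ψ/dp > m` near `β` this gives
`ψ ≥ m * p + C`, and since `p → ∞`, eventually `ψ / p > m'` for every `m' < m`. Applied to `-ψ`
the same bound gives the upper estimate.
-/

open Filter Set Topology

/-- `HasRightDerivWrt ψ p d x` says that `(d⁺ψ/dp)(x) = d`. -/
def HasRightDerivWrt (ψ p : ℝ → ℝ) (d x : ℝ) : Prop :=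
  Tendsto (fun ε => (ψ (x + ε) - ψ x) / (p (x + ε) - p x)) (𝓝[>] 0) (𝓝 d)

theorem tendsto_sub_nhdsGT_zero (x : ℝ) : Tendsto (fun z : ℝ => z - x) (𝓝[>] x) (𝓝[>] 0) :=
  tendsto_nhdsWithin_of_tendsto_nhds_of_eventually_within _
    (((continuous_sub_right x).tendsto' x 0 (sub_self x)).mono_left nhdsWithin_le_nhds)
    (eventually_nhdsWithin_of_forall fun _ hz => mem_Ioi.2 (sub_pos.2 hz))

namespace HasRightDerivWrt

variable {ψ p : ℝ → ℝ} {d x : ℝ}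

theorem neg (h : HasRightDerivWrt ψ p d x) : HasRightDerivWrt (-ψ) p (-d) x :=
  (Tendsto.neg h).congr fun ε => by simp only [Pi.neg_apply]; ring

theorem eventually_lt_slope (h : HasRightDerivWrt ψ p d x) {m : ℝ} (hm : m < d) :
    ∀ᶠ z in 𝓝[>] x, m < (ψ z - ψ x) / (p z - p x) := by
  filter_upwards [(h.comp (tendsto_sub_nhdsGT_zero x)).eventually (eventually_gt_nhds hm)]
    with z hz
  simpa using hz

end HasRightDerivWrt

theorem le_of_frequently_lt_right {h : ℝ → ℝ} {a b : ℝ} (hh : ContinuousOn h (Icc a b))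
    (hab : a ≤ b) (hdec : ∀ x ∈ Ico a b, ∃ᶠ z in 𝓝[>] x, h z < h x) : h b ≤ h a := by
  refine image_le_of_liminf_slope_right_le_deriv_boundary (B := fun _ => h a) (B' := fun _ => 0) hh le_rfl
    continuousOn_const (fun x _ => hasDerivWithinAt_const x _ (h a)) (fun x hx r hr => ?_)
    (right_mem_Icc.2 hab)
  refine (hdec x hx).mp (eventually_nhdsWithin_of_forall fun z (hxz : x < z) hz => ?_)
  rw [slope_def_field]
  exact (div_neg_of_neg_of_pos (sub_neg.2 hz) (sub_pos.2 hxz)).trans hr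

theorem StrictMonoOn.mul_sub_le_sub_of_hasRightDerivWrt {p ψ D : ℝ → ℝ} {a b m : ℝ}
    (hp : StrictMonoOn p (Icc a b)) (hab : a ≤ b) (hpc : ContinuousOn p (Icc a b))
    (hψc : ContinuousOn ψ (Icc a b)) (hD : ∀ x ∈ Ico a b, HasRightDerivWrt ψ p (D x) x)
    (hm : ∀ x ∈ Ico a b, m < D x) : m * (p b - p a) ≤ ψ b - ψ a := by
  suffices m * p b - ψ b ≤ m * p a - ψ a by linarith
  refine le_of_frequently_lt_right (h := fun z => m * p z - ψ z)
    ((continuousOn_const.mul hpc).sub hψc) hab fun x hx => Eventually.frequently ?_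
  filter_upwards [(hD x hx).eventually_lt_slope (hm x hx), Ioo_mem_nhdsGT hx.2] with z hslope hz
  have hpz : 0 < p z - p x :=
    sub_pos.2 (hp (Ico_subset_Icc_self hx) ⟨hx.1.trans hz.1.le, hz.2.le⟩ hz.1)
  have := (lt_div_iff₀ hpz).1 hslope
  linarith

theorem eventually_lt_div_of_mul_add_le {ι : Type*} {l : Filter ι} {p ψ : ι → ℝ}
    (hp : Tendsto p l atTop) {m₁ m₂ C : ℝ} (hm : m₁ < m₂) (h : ∀ᶠ x in l, m₂ * p x + C ≤ ψ x) :
    ∀ᶠ x in l, m₁ < ψ x / p x := by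
  filter_upwards [h, hp.eventually_gt_atTop 0, hp.eventually_gt_atTop (-C / (m₂ - m₁))]
    with x hx hpos hlarge
  have : -C < (m₂ - m₁) * p x := (div_lt_iff₀' (sub_pos.2 hm)).1 hlarge
  rw [lt_div_iff₀ hpos]
  linarith

theorem mem_leftLimFilter_of_lt {a β : EReal} (ha : a < β) :
    {x : ℝ | a < x ∧ (x : EReal) < β} ∈ leftLimFilter β :=
  mem_comap.2 ⟨Ioo a β, Ioo_mem_nhdsLT ha, fun _ hx => hx⟩

theorem exists_forall_of_eventually_leftLimFilter {α β : EReal} (hαβ : α < β) {P : ℝ → Prop}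
    (h : ∀ᶠ x in leftLimFilter β, P x) :
    ∃ a : ℝ, α < a ∧ (a : EReal) < β ∧ ∀ x : ℝ, a ≤ x → (x : EReal) < β → P x := by
  obtain ⟨t, ht, hts⟩ := mem_comap.1 h
  obtain ⟨c, hc, hct⟩ := (mem_nhdsLT_iff_exists_Ioo_subset' hαβ).1 ht
  obtain ⟨a, hca, haβ⟩ := EReal.lt_iff_exists_real_btwn.1 (max_lt hc hαβ)
  exact ⟨a, (le_max_right _ _).trans_lt hca, haβ, fun x hax hxβ =>
    hts (hct ⟨((le_max_left _ _).trans_lt hca).trans_le (EReal.coe_le_coe_iff.2 hax), hxβ⟩)⟩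

section RatioLimit

variable {α β : EReal} {p ψ D : ℝ → ℝ}

theorem exists_eventually_mul_add_le (hαβ : α < β)
    (hp_mono : StrictMonoOn p {x : ℝ | α < (x : EReal) ∧ (x : EReal) < β})
    (hp_cont : ContinuousOn p {x : ℝ | α < (x : EReal) ∧ (x : EReal) < β})
    (hψ_cont : ContinuousOn ψ {x : ℝ | α < (x : EReal) ∧ (x : EReal) < β})
    (hD : ∀ x : ℝ, α < (x : EReal) → (x : EReal) < β → HasRightDerivWrt ψ p (D x) x)
    {m : ℝ} (hm : ∀ᶠ x in leftLimFilter β, m < D x) :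
    ∃ C, ∀ᶠ x in leftLimFilter β, m * p x + C ≤ ψ x := by
  obtain ⟨a, hαa, haβ, ha⟩ := exists_forall_of_eventually_leftLimFilter hαβ hm
  refine ⟨ψ a - m * p a, ?_⟩
  filter_upwards [mem_leftLimFilter_of_lt haβ] with x ⟨hax, hxβ⟩
  have hsub : Icc a x ⊆ {y : ℝ | α < (y : EReal) ∧ (y : EReal) < β} := fun y hy =>
    ⟨hαa.trans_le (EReal.coe_le_coe_iff.2 hy.1), (EReal.coe_le_coe_iff.2 hy.2).trans_lt hxβ⟩
  have := (hp_mono.mono hsub).mul_sub_le_sub_of_hasRightDerivWrt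
    (EReal.coe_lt_coe_iff.1 hax).le (hp_cont.mono hsub) (hψ_cont.mono hsub)
    (fun y hy => hD y (hsub (Ico_subset_Icc_self hy)).1 (hsub (Ico_subset_Icc_self hy)).2)
    (fun y hy => ha y hy.1 (hsub (Ico_subset_Icc_self hy)).2)
  linarith

theorem eventually_lt_div_of_lt_of_tendsto (hαβ : α < β)
    (hp_mono : StrictMonoOn p {x : ℝ | α < (x : EReal) ∧ (x : EReal) < β})
    (hp_cont : ContinuousOn p {x : ℝ | α < (x : EReal) ∧ (x : EReal) < β})
    (hp_top : Tendsto p (leftLimFilter β) atTop)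
    (hψ_cont : ContinuousOn ψ {x : ℝ | α < (x : EReal) ∧ (x : EReal) < β})
    (hD : ∀ x : ℝ, α < (x : EReal) → (x : EReal) < β → HasRightDerivWrt ψ p (D x) x)
    {L : EReal} (hL : Tendsto (fun x => (D x : EReal)) (leftLimFilter β) (𝓝 L))
    {a : EReal} (ha : a < L) : ∀ᶠ x in leftLimFilter β, a < ((ψ x / p x : ℝ) : EReal) := by
  obtain ⟨m₁, ham₁, hm₁L⟩ := EReal.lt_iff_exists_real_btwn.1 ha
  obtain ⟨m₂, hm₁₂, hm₂L⟩ := EReal.lt_iff_exists_real_btwn.1 hm₁L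
  have hm : ∀ᶠ x in leftLimFilter β, m₂ < D x :=
    (hL.eventually (eventually_gt_nhds hm₂L)).mono fun _ h => EReal.coe_lt_coe_iff.1 h
  obtain ⟨C, hC⟩ := exists_eventually_mul_add_le hαβ hp_mono hp_cont hψ_cont hD hm
  filter_upwards [eventually_lt_div_of_mul_add_le hp_top (EReal.coe_lt_coe_iff.1 hm₁₂) hC]
    with x hx
  exact ham₁.trans (EReal.coe_lt_coe_iff.2 hx)

end RatioLimit

theorem ratio_to_scale_tendsto_of_right_derivative_general
    (α β : EReal) (hαβ : α < β)
    (p ψ D : ℝ → ℝ)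
    (hp_mono : StrictMonoOn p {x : ℝ | α < (x : EReal) ∧ (x : EReal) < β})
    (hp_cont : ContinuousOn p {x : ℝ | α < (x : EReal) ∧ (x : EReal) < β})
    (hp_top : Tendsto p (leftLimFilter β) atTop)
    (hψ_cont : ContinuousOn ψ {x : ℝ | α < (x : EReal) ∧ (x : EReal) < β})
    (hD : ∀ x : ℝ, α < (x : EReal) → (x : EReal) < β →
      Tendsto (fun ε => (ψ (x + ε) - ψ x) / (p (x + ε) - p x))
        (nhdsWithin 0 (Set.Ioi 0)) (nhds (D x)))
    (L : EReal)
    (hL : Tendsto (fun x => (D x : EReal)) (leftLimFilter β) (nhds L)) :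
    Tendsto (fun x => ((ψ x / p x : ℝ) : EReal)) (leftLimFilter β) (nhds L) := by
  rw [tendsto_order]
  refine ⟨fun a ha => eventually_lt_div_of_lt_of_tendsto hαβ hp_mono hp_cont hp_top hψ_cont hD hL ha,
    fun b hb => ?_⟩
  have hL_neg : Tendsto (fun x => ((-D x : ℝ) : EReal)) (leftLimFilter β) (𝓝 (-L)) := by
    simpa only [EReal.coe_neg] using hL.neg
  filter_upwards [eventually_lt_div_of_lt_of_tendsto (ψ := -ψ) hαβ hp_mono hp_cont hp_top
    hψ_cont.neg (fun x hαx hxβ => HasRightDerivWrt.neg (hD x hαx hxβ)) hL_neg (EReal.neg_lt_neg_iff.2 hb)]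
    with x hx
  rwa [Pi.neg_apply, neg_div, EReal.coe_neg, EReal.neg_lt_neg_iff] at hx

/-- If `p : (α, β) → ℝ` is continuous strictly increasing with `p(x) → ∞` as `x → β⁻`, and
`ψ : (α, β) → (0, ∞)` is continuous with right derivative `d⁺ψ/dp → L ∈ (0, ∞]` at `β⁻`,
then `ψ(x)/p(x) → L` as `x → β⁻`. -/
theorem ratio_to_scale_tendsto_of_right_derivative
    (α β : EReal) (hαβ : α < β)
    (p ψ D : ℝ → ℝ)
    (hp_mono : StrictMonoOn p {x : ℝ | α < (x : EReal) ∧ (x : EReal) < β})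
    (hp_cont : ContinuousOn p {x : ℝ | α < (x : EReal) ∧ (x : EReal) < β})
    (hp_top : Tendsto p (leftLimFilter β) atTop)
    (hψ_pos : ∀ x : ℝ, α < (x : EReal) → (x : EReal) < β → 0 < ψ x)
    (hψ_cont : ContinuousOn ψ {x : ℝ | α < (x : EReal) ∧ (x : EReal) < β})
    (hD : ∀ x : ℝ, α < (x : EReal) → (x : EReal) < β →
      Tendsto (fun ε => (ψ (x + ε) - ψ x) / (p (x + ε) - p x))
        (nhdsWithin 0 (Set.Ioi 0)) (nhds (D x)))
    (L : EReal) (hL0 : 0 < L)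
    (hL : Tendsto (fun x => (D x : EReal)) (leftLimFilter β) (nhds L)) :
    Tendsto (fun x => ((ψ x / p x : ℝ) : EReal)) (leftLimFilter β) (nhds L) :=
  ratio_to_scale_tendsto_of_right_derivative_general α β hαβ p ψ D hp_mono hp_cont hp_top hψ_cont hD
    L hL
end
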